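/- arXiv:2605.23022 — 2 statements merged into one kernel-verified Lean document; each statement's English description precedes it below -/
import Mathlib

section
/- There exists a model of Peano-like arithmetic with a nonstandard element refuting right-identity of addition: on the universe U = ℕ ⊔ ℤ (naturals as standard elements, integers as primed nonstandard elements), interpret S(i) = i+1 on standard elements and S(i') = (i+1)' on nonstandard elements, Z = 0, and plus by plus(i,j) = i+j, plus(i',j') = (i+j)', plus(i',j) = (i+j+1)', plus(i,j') = (i+j)'. Then this interpretation of plus satisfies the defining recurrence plus(n,m) = if n = Z then m else S(plus(pred n, m)) for all elements n,m of U (where pred is the partial inverse of S), yet there exists an element n of U (namely any primed element i') with plus(n, Z) ≠ n. -/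
abbrev U := ℕ ⊕ ℤ

def Z : U := Sum.inl 0

def S : U → U
  | Sum.inl i => Sum.inl (i + 1)
  | Sum.inr i => Sum.inr (i + 1)

def pred : U → U
  | Sum.inl i => Sum.inl (i - 1)
  | Sum.inr i => Sum.inr (i - 1)

def isZ (u : U) : Prop := u = Sum.inl 0

instance : DecidablePred isZ := fun u => decEq u (Sum.inl 0)

def plus : U → U → U
  | Sum.inl i, Sum.inl j => Sum.inl (i + j)
  | Sum.inr i, Sum.inr j => Sum.inr (i + j)
  | Sum.inr i, Sum.inl j => Sum.inr (i + (j : ℤ) + 1)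
  | Sum.inl i, Sum.inr j => Sum.inr ((i : ℤ) + j)

theorem nonstandard_model_refutes_right_identity :
    (∀ n m : U, plus n m = if isZ n then m else S (plus (pred n) m)) ∧
    (∃ n : U, plus n Z ≠ n) := by
  constructor
  · rintro (i | i) (j | j)
    · rcases Nat.eq_zero_or_pos i with h | h
      · subst h; simp [plus, isZ]
      · have : ¬ isZ (Sum.inl i : U) := by
          simp [isZ]; omega
        simp only [if_neg this]
        simp [plus, pred, S]
        omega
    · rcases Nat.eq_zero_or_pos i with h | h
      · subst h; simp [plus, isZ, S]
      · have : ¬ isZ (Sum.inl i : U) := by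
          simp [isZ]; omega
        simp only [if_neg this]
        simp [plus, pred, S]
        omega
    · have : ¬ isZ (Sum.inr i : U) := by simp [isZ]
      simp only [if_neg this]
      simp [plus, pred, S]; ring
    · have : ¬ isZ (Sum.inr i : U) := by simp [isZ]
      simp only [if_neg this]
      simp [plus, pred, S]; ring
  · exact ⟨Sum.inr 0, by simp [plus, Z]⟩
end

section
/- In the double-sequence nonstandard list model, for the element x whose front sequence is (0,1,2,3,...) with index 0 and back sequence is (1,2,3,...) with index 0, every tail-iterate tail^i(x) for i ≥ 1 has neither front nor back sequence beginning with 0; consequently, under the interpretation rev that swaps front and back (duplicating a leading 0 of the back during reversal), rev(rev(tail^i x)) = tail^i x for all i ≥ 1 while rev(rev x) ≠ x. -/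
abbrev NElem := ((ℕ → ℤ) × ℤ) × ((ℕ → ℤ) × ℤ)

def tailN (x : NElem) : NElem :=
  ((fun n => x.1.1 (n + 1), x.1.2 - 1), x.2)

def revN (x : NElem) : NElem :=
  if x.2.1 0 = 0 then
    ((fun n => if n = 0 then 0 else x.2.1 (n - 1), x.2.2 + 1), x.1)
  else (x.2, x.1)

def xElem : NElem := ((fun n => (n : ℤ), 0), (fun n => (n : ℤ) + 1, 0))

lemma tail_iter (i : ℕ) :
    tailN^[i] xElem = ((fun n : ℕ => (n : ℤ) + i, -(i : ℤ)), (fun n : ℕ => (n : ℤ) + 1, 0)) := by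
  induction i with
  | zero => simp [xElem]
  | succ k ih =>
    rw [Function.iterate_succ_apply', ih]
    simp only [tailN]
    refine Prod.ext (Prod.ext ?_ ?_) rfl
    · funext n; push_cast; ring
    · push_cast; ring

theorem double_sequence_rogue_model :
    (∀ i : ℕ, 1 ≤ i → (tailN^[i] xElem).1.1 0 ≠ 0 ∧ (tailN^[i] xElem).2.1 0 ≠ 0) ∧
    (∀ i : ℕ, 1 ≤ i → revN (revN (tailN^[i] xElem)) = tailN^[i] xElem) ∧
    revN (revN xElem) ≠ xElem := by
  refine ⟨?_, ?_, ?_⟩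
  · intro i hi
    rw [tail_iter]
    constructor <;> simp <;> omega
  · intro i hi
    rw [tail_iter]
    have h1 : ((fun n : ℕ => (n : ℤ) + i) 0) ≠ 0 := by simp; omega
    simp only [revN]
    norm_num
    omega
  · intro h
    simp only [revN, xElem] at h
    norm_num at h
end
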